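/- For a permutation π ∈ S_n, the poisoning of A_π by D(π) is minimal (i.e., for every (p,q) ∈ D(π), there exists an essential box (i,j) ∈ Ess(π) and a diagonal of size 1 + r(i,j) in the northwest i × j rectangle which meets D(π) only at (p,q)) if and only if π is vexillary. -/
import Mathlib


open Equiv Finset

/-- `(p,q)` (0-indexed) is a box of the diagram `D(π)`:
`π(p) > q` and `π⁻¹(q) > p`. -/
def InDiag {n : ℕ} (π : Equiv.Perm (Fin n)) (p q : ℕ) : Prop :=
  ∃ (hp : p < n) (hq : q < n),
    q < (π ⟨p, hp⟩ : ℕ) ∧ p < (π.symm ⟨q, hq⟩ : ℕ)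

/-- `(p,q)` is in the essential set `Ess(π)`: a southeast corner of `D(π)`. -/
def InEss {n : ℕ} (π : Equiv.Perm (Fin n)) (p q : ℕ) : Prop :=
  InDiag π p q ∧ ¬ InDiag π (p + 1) q ∧ ¬ InDiag π p (q + 1)

/-- The rank function `r(p,q) = #{i ≤ p : π(i) ≤ q}` (0-indexed). -/
def rk {n : ℕ} (π : Equiv.Perm (Fin n)) (p q : ℕ) : ℕ :=
  (Finset.univ.filter (fun i : Fin n => (i : ℕ) ≤ p ∧ (π i : ℕ) ≤ q)).card

/-- The dots of `π` strictly northwest of `(i,j)` form a diagonal: any two of them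
are ordered strictly northwest-to-southeast. -/
def Diagonalizes {n : ℕ} (π : Equiv.Perm (Fin n)) (i j : ℕ) : Prop :=
  ∀ a b : Fin n, (a : ℕ) < i → (π a : ℕ) < j → (b : ℕ) < i → (π b : ℕ) < j →
    a < b → π a < π b

/-- `π` is vexillary, i.e. 2143-avoiding. -/
def Vexillary {n : ℕ} (π : Equiv.Perm (Fin n)) : Prop :=
  ¬ ∃ a b c d : Fin n, a < b ∧ b < c ∧ c < d ∧
    π b < π a ∧ π a < π d ∧ π d < π c

/-- `(p,q) ∈ D(π)` is accessible: `r(p,q) ≠ 0` and no box of `D(π)` other than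
`(p,q)` itself lies weakly southeast of `(p,q)`. -/
def Accessible {n : ℕ} (π : Equiv.Perm (Fin n)) (p q : Fin n) : Prop :=
  InDiag π p q ∧ rk π p q ≠ 0 ∧
    ∀ i j : ℕ, InDiag π i j → (p : ℕ) ≤ i → (q : ℕ) ≤ j → i = (p : ℕ) ∧ j = (q : ℕ)

/-- `δ` is a diagonal in the northwest rectangle with southeast corner `(i,j)`. -/
def IsDiagonalIn (m : ℕ) (δ : Fin m → ℕ × ℕ) (i j : ℕ) : Prop :=
  (∀ l l' : Fin m, l < l' → (δ l).1 < (δ l').1 ∧ (δ l).2 < (δ l').2) ∧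
  (∀ l, (δ l).1 ≤ i ∧ (δ l).2 ≤ j)

lemma indiag_lt {n : ℕ} (π : Equiv.Perm (Fin n)) {p q : ℕ} (h : InDiag π p q) :
    p < n ∧ q < n := by
  obtain ⟨hp, hq, -, -⟩ := h; exact ⟨hp, hq⟩

/-- For a vexillary `π` and a diagram box `(i,j)`, the dots weakly NW of `(i,j)`
form a chain. -/
lemma chainL {n : ℕ} {π : Equiv.Perm (Fin n)} (hvex : Vexillary π) {i j : ℕ}
    (hd : InDiag π i j) (a b : Fin n) (ha : (a : ℕ) ≤ i) (ha' : (π a : ℕ) ≤ j)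
    (hb : (b : ℕ) ≤ i) (hb' : (π b : ℕ) ≤ j) (hab : a < b) : π a < π b := by
  obtain ⟨hi, hj, h1, h2⟩ := hd
  by_contra hc
  have hne : π a ≠ π b := fun h => absurd (π.injective h) (ne_of_lt hab)
  have hba : π b < π a := lt_of_le_of_ne (not_lt.1 hc) (Ne.symm hne)
  -- b ≠ ⟨i, hi⟩ since π b ≤ j < π ⟨i, hi⟩
  have hbi : (b : ℕ) < i := by
    rcases lt_or_eq_of_le hb with h | h
    · exact h
    · exfalso
      have : b = ⟨i, hi⟩ := Fin.ext h
      rw [this] at hb'; omega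
  -- π a ≠ ⟨j, hj⟩ since a ≤ i < π.symm ⟨j, hj⟩
  have haj : (π a : ℕ) < j := by
    rcases lt_or_eq_of_le ha' with h | h
    · exact h
    · exfalso
      have : π a = ⟨j, hj⟩ := Fin.ext h
      have : a = π.symm ⟨j, hj⟩ := by
        rw [← this]; simp
      rw [this] at ha; omega
  exact hvex ⟨a, b, ⟨i, hi⟩, π.symm ⟨j, hj⟩, hab, by
    rw [Fin.lt_def]; exact hbi, by
    rw [Fin.lt_def]; exact h2, hba, by
    rw [Fin.lt_def]; simpa using haj, by
    rw [Fin.lt_def]; simpa using h1⟩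

/-- Staircase walk: from any diagram box there is an essential box weakly SE of it,
such that every row and every column of the connecting rectangle interval meets `D`. -/
lemma walk_ess {n : ℕ} (π : Equiv.Perm (Fin n)) :
    ∀ k p q, 2*n - (p+q) ≤ k → InDiag π p q →
    ∃ i j, InEss π i j ∧ p ≤ i ∧ q ≤ j ∧
      (∀ y, q ≤ y → y ≤ j → ∃ x, p ≤ x ∧ x ≤ i ∧ InDiag π x y) ∧
      (∀ x, p ≤ x → x ≤ i → ∃ y, q ≤ y ∧ y ≤ j ∧ InDiag π x y) := by
  intro k
  induction k with
  | zero =>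
    intro p q hk h
    obtain ⟨hp, hq⟩ := indiag_lt π h
    omega
  | succ k ih =>
    intro p q hk h
    obtain ⟨hp, hq⟩ := indiag_lt π h
    by_cases h1 : InDiag π p (q+1)
    · obtain ⟨i, j, he, hpi, hqj, hcol, hrow⟩ := ih p (q+1) (by omega) h1
      refine ⟨i, j, he, hpi, by omega, ?_, ?_⟩
      · intro y hy1 hy2
        rcases eq_or_lt_of_le hy1 with h' | h'
        · exact ⟨p, le_refl _, hpi, h' ▸ h⟩
        · exact hcol y (by omega) hy2
      · intro x hx1 hx2
        obtain ⟨y, hy1, hy2, hyD⟩ := hrow x hx1 hx2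
        exact ⟨y, by omega, hy2, hyD⟩
    · by_cases h2 : InDiag π (p+1) q
      · obtain ⟨i, j, he, hpi, hqj, hcol, hrow⟩ := ih (p+1) q (by omega) h2
        refine ⟨i, j, he, by omega, hqj, ?_, ?_⟩
        · intro y hy1 hy2
          obtain ⟨x, hx1, hx2, hxD⟩ := hcol y hy1 hy2
          exact ⟨x, by omega, hx2, hxD⟩
        · intro x hx1 hx2
          rcases eq_or_lt_of_le hx1 with h' | h'
          · exact ⟨q, le_refl _, hqj, h' ▸ h⟩
          · exact hrow x (by omega) hx2
      · refine ⟨p, q, ⟨h, h2, h1⟩, le_refl _, le_refl _, ?_, ?_⟩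
        · intro y hy1 hy2
          have : y = q := le_antisymm hy2 hy1
          exact ⟨p, le_refl _, le_refl _, this ▸ h⟩
        · intro x hx1 hx2
          have : x = p := le_antisymm hx2 hx1
          exact ⟨q, le_refl _, le_refl _, this ▸ h⟩

lemma mulHelper (A B sN tN N : ℕ) (hBA : B < A) (hs : sN ≤ N) :
    B*(N+1) + sN < A*(N+1) + tN := by
  have h1 : (B+1)*(N+1) = B*(N+1)+(N+1) := Nat.succ_mul _ _
  have h2 : (B+1)*(N+1) ≤ A*(N+1) := Nat.mul_le_mul_right _ hBA
  omega

/-- From any 2143 pattern, extract a "minimal" one with nice interior structure. -/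
lemma min_pattern {n : ℕ} (π : Equiv.Perm (Fin n))
    (h : ∃ a b c d : Fin n, a < b ∧ b < c ∧ c < d ∧
      π b < π a ∧ π a < π d ∧ π d < π c) :
    ∃ a b c d : Fin n, a < b ∧ b < c ∧ c < d ∧
      π b < π a ∧ π a < π d ∧ π d < π c ∧
      (∀ x : Fin n, b < x → x < c → π a < π x ∧ π x < π d) ∧
      (∀ v : Fin n, π a < π v → π v < π d → b < v ∧ v < c) ∧
      (∀ x y : Fin n, b < x → x < y → y < c → π x < π y) := by
  classical
  set P : Finset (Fin n × Fin n × Fin n × Fin n) :=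
    univ.filter (fun t => t.1 < t.2.1 ∧ t.2.1 < t.2.2.1 ∧ t.2.2.1 < t.2.2.2 ∧
      π t.2.1 < π t.1 ∧ π t.1 < π t.2.2.2 ∧ π t.2.2.2 < π t.2.2.1) with hP
  have hPne : P.Nonempty := by
    obtain ⟨a, b, c, d, h1, h2, h3, h4, h5, h6⟩ := h
    exact ⟨⟨a, b, c, d⟩, by
      simp only [hP, mem_filter, mem_univ, true_and]
      exact ⟨h1, h2, h3, h4, h5, h6⟩⟩
  set μ : Fin n × Fin n × Fin n × Fin n → ℕ :=
    fun t => ((t.2.2.1:ℕ) - (t.2.1:ℕ)) * (n+1) + (((π t.2.2.2 : Fin n):ℕ) - ((π t.1 : Fin n):ℕ))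
    with hμ
  obtain ⟨t, htP, htmin⟩ := P.exists_min_image μ hPne
  obtain ⟨a, b, c, d⟩ := t
  rw [hP, mem_filter] at htP
  obtain ⟨-, hab, hbc, hcd, hba, had, hdc⟩ := htP
  have hab' : (a:ℕ) < b := hab
  have hbc' : (b:ℕ) < c := hbc
  have hcd' : (c:ℕ) < d := hcd
  have hba' : ((π b : Fin n):ℕ) < (π a : Fin n) := hba
  have had' : ((π a : Fin n):ℕ) < (π d : Fin n) := had
  have hdc' : ((π d : Fin n):ℕ) < (π c : Fin n) := hdc
  have hμabcd : μ (a, b, c, d) = ((c:ℕ) - (b:ℕ)) * (n+1) +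
      (((π d : Fin n):ℕ) - ((π a : Fin n):ℕ)) := rfl
  have hinj : ∀ x y : Fin n, π x = π y → x = y := fun x y hxy => π.injective hxy
  have hmem : ∀ t' : Fin n × Fin n × Fin n × Fin n,
      t'.1 < t'.2.1 → t'.2.1 < t'.2.2.1 → t'.2.2.1 < t'.2.2.2 →
      π t'.2.1 < π t'.1 → π t'.1 < π t'.2.2.2 → π t'.2.2.2 < π t'.2.2.1 → t' ∈ P := by
    intro t' h1 h2 h3 h4 h5 h6
    simp only [hP, mem_filter, mem_univ, true_and]
    exact ⟨h1, h2, h3, h4, h5, h6⟩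
  have hA : ∀ x : Fin n, b < x → x < c → π a < π x ∧ π x < π d := by
    intro x hbx hxc
    have hax : a < x := lt_trans hab hbx
    have hxd : x < d := lt_trans hxc hcd
    constructor
    · by_contra hc1
      have hne : π x ≠ π a := fun h => absurd (hinj _ _ h) (ne_of_gt hax)
      have hxa : π x < π a := lt_of_le_of_ne (not_lt.1 hc1) hne
      have hnew := hmem (a, x, c, d) hax hxc hcd hxa had hdc
      have := htmin _ hnew
      rw [hμabcd] at this
      have hlt : μ (a, x, c, d) < ((c:ℕ) - (b:ℕ)) * (n+1) +
          (((π d : Fin n):ℕ) - ((π a : Fin n):ℕ)) := by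
        have : μ (a, x, c, d) = ((c:ℕ) - (x:ℕ)) * (n+1) +
            (((π d : Fin n):ℕ) - ((π a : Fin n):ℕ)) := rfl
        rw [this]
        have hxc' : (x:ℕ) < c := hxc
        have hbx' : (b:ℕ) < x := hbx
        exact mulHelper _ _ _ _ n (by omega) (by have := ((π d : Fin n)).isLt; omega)
      omega
    · by_contra hc1
      have hne : π x ≠ π d := fun h => absurd (hinj _ _ h) (ne_of_lt hxd)
      have hdx : π d < π x := lt_of_le_of_ne (not_lt.1 hc1) (Ne.symm hne)
      have hnew := hmem (a, b, x, d) hab hbx hxd hba had hdx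
      have := htmin _ hnew
      rw [hμabcd] at this
      have hlt : μ (a, b, x, d) < ((c:ℕ) - (b:ℕ)) * (n+1) +
          (((π d : Fin n):ℕ) - ((π a : Fin n):ℕ)) := by
        have he : μ (a, b, x, d) = ((x:ℕ) - (b:ℕ)) * (n+1) +
            (((π d : Fin n):ℕ) - ((π a : Fin n):ℕ)) := rfl
        rw [he]
        have hxc' : (x:ℕ) < c := hxc
        have hbx' : (b:ℕ) < x := hbx
        exact mulHelper _ _ _ _ n (by omega) (by have := ((π d : Fin n)).isLt; omega)
      omega
  have hB : ∀ v : Fin n, π a < π v → π v < π d → b < v ∧ v < c := by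
    intro v h1 h2
    constructor
    · by_contra hc1
      have hne : v ≠ b := by
        intro h; rw [h] at h1; exact absurd (lt_trans hba h1) (lt_irrefl _)
      have hvb : v < b := lt_of_le_of_ne (not_lt.1 hc1) hne
      have hnew := hmem (v, b, c, d) hvb hbc hcd (lt_trans hba h1) h2 hdc
      have := htmin _ hnew
      rw [hμabcd] at this
      have he : μ (v, b, c, d) = ((c:ℕ) - (b:ℕ)) * (n+1) +
          (((π d : Fin n):ℕ) - ((π v : Fin n):ℕ)) := rfl
      rw [he] at this
      have h1' : ((π a : Fin n):ℕ) < (π v : Fin n) := h1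
      have h2' : ((π v : Fin n):ℕ) < (π d : Fin n) := h2
      omega
    · by_contra hc1
      have hne : v ≠ c := by
        intro h; rw [h] at h2; exact absurd (lt_trans h2 hdc) (lt_irrefl _)
      have hcv : c < v := lt_of_le_of_ne (not_lt.1 hc1) (Ne.symm hne)
      have hnew := hmem (a, b, c, v) hab hbc hcv hba h1 (lt_trans h2 hdc)
      have := htmin _ hnew
      rw [hμabcd] at this
      have he : μ (a, b, c, v) = ((c:ℕ) - (b:ℕ)) * (n+1) +
          (((π v : Fin n):ℕ) - ((π a : Fin n):ℕ)) := rfl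
      rw [he] at this
      have h1' : ((π a : Fin n):ℕ) < (π v : Fin n) := h1
      have h2' : ((π v : Fin n):ℕ) < (π d : Fin n) := h2
      omega
  have hC : ∀ x y : Fin n, b < x → x < y → y < c → π x < π y := by
    intro x y hbx hxy hyc
    by_contra hc1
    have hne : π y ≠ π x := fun h => absurd (hinj _ _ h) (ne_of_gt hxy)
    have hyx : π y < π x := lt_of_le_of_ne (not_lt.1 hc1) hne
    have hay : π a < π y := (hA y (lt_trans hbx hxy) hyc).1
    have hnew := hmem (a, b, x, y) hab hbx hxy hba hay hyx
    have := htmin _ hnew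
    rw [hμabcd] at this
    have he : μ (a, b, x, y) = ((x:ℕ) - (b:ℕ)) * (n+1) +
        (((π y : Fin n):ℕ) - ((π a : Fin n):ℕ)) := rfl
    rw [he] at this
    have hlt : ((x:ℕ) - (b:ℕ)) * (n+1) +
        (((π y : Fin n):ℕ) - ((π a : Fin n):ℕ)) < ((c:ℕ) - (b:ℕ)) * (n+1) +
        (((π d : Fin n):ℕ) - ((π a : Fin n):ℕ)) := by
      have hxc' : (x:ℕ) < c := lt_trans hxy hyc
      have hbx' : (b:ℕ) < x := hbx
      exact mulHelper _ _ _ _ n (by omega) (by have := ((π y : Fin n)).isLt; omega)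
    omega
  exact ⟨a, b, c, d, hab, hbc, hcd, hba, had, hdc, hA, hB, hC⟩

lemma forward {n : ℕ} (π : Equiv.Perm (Fin n))
    (H : ∀ p q : ℕ, InDiag π p q → ∃ i j : ℕ, InEss π i j ∧
      ∃ δ : Fin (1 + rk π i j) → ℕ × ℕ, IsDiagonalIn (1 + rk π i j) δ i j ∧
        (∃ l, δ l = (p, q)) ∧ (∀ l, InDiag π (δ l).1 (δ l).2 → δ l = (p, q))) :
    Vexillary π := by
  classical
  intro hpat
  obtain ⟨a, b, c, d, hab, hbc, hcd, hba, had, hdc, hA, hB, hC⟩ := min_pattern π hpat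
  have hab' : (a:ℕ) < b := hab
  have hbc' : (b:ℕ) < c := hbc
  have hcd' : (c:ℕ) < d := hcd
  have hba' : ((π b : Fin n):ℕ) < ((π a : Fin n):ℕ) := hba
  have had' : ((π a : Fin n):ℕ) < ((π d : Fin n):ℕ) := had
  have hdc' : ((π d : Fin n):ℕ) < ((π c : Fin n):ℕ) := hdc
  have hcn : (c:ℕ) < n := c.isLt
  have hdn : ((π d : Fin n):ℕ) < n := (π d).isLt
  -- the interior is an increasing bijection between intervals, so the interval
  -- lengths agree
  have himg : (Finset.Ioo b c).image π = Finset.Ioo (π a) (π d) := by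
    ext v
    simp only [mem_image, Finset.mem_Ioo]
    constructor
    · rintro ⟨x, hx, rfl⟩
      exact hA x hx.1 hx.2
    · intro hv
      refine ⟨π.symm v, ?_, by simp⟩
      have := hB (π.symm v) (by simpa using hv.1) (by simpa using hv.2)
      exact this
  have hcard : (c:ℕ) - (b:ℕ) - 1 = ((π d : Fin n):ℕ) - ((π a : Fin n):ℕ) - 1 := by
    have h1 := Finset.card_image_of_injective (Finset.Ioo b c) π.injective
    rw [himg] at h1
    rw [Fin.card_Ioo, Fin.card_Ioo] at h1
    omega
  set mm := (c:ℕ) - (b:ℕ) - 1 with hmmdef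
  have hcval : (c:ℕ) = (b:ℕ) + 1 + mm := by omega
  have hdval : ((π d : Fin n):ℕ) = ((π a : Fin n):ℕ) + 1 + mm := by omega
  -- values of the interior dots
  have hlow : ∀ m : ℕ, ∀ x : Fin n, (x:ℕ) = (b:ℕ) + m → 1 ≤ m → m ≤ mm →
      ((π a : Fin n):ℕ) + m ≤ ((π x : Fin n):ℕ) := by
    intro m
    induction m with
    | zero => intro x hx h1 h2; exact absurd h1 (by omega)
    | succ m ih =>
      intro x hx h1 h2
      by_cases hm' : m = 0
      · subst hm'
        have hx1 := (hA x (by rw [Fin.lt_def]; omega) (by rw [Fin.lt_def]; omega)).1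
        have := Fin.lt_def.1 hx1
        omega
      · have hyn : (b:ℕ) + m < n := by have := x.isLt; omega
        set y : Fin n := ⟨(b:ℕ) + m, hyn⟩ with hydef
        have hyval : (y:ℕ) = (b:ℕ) + m := rfl
        have ihy := ih y hyval (by omega) (by omega)
        have hxy := hC y x (by rw [Fin.lt_def]; omega) (by rw [Fin.lt_def]; omega)
          (by rw [Fin.lt_def]; omega)
        have := Fin.lt_def.1 hxy
        omega
  have hupp : ∀ t : ℕ, ∀ m : ℕ, ∀ x : Fin n, (x:ℕ) = (b:ℕ) + m → m + t = mm → 1 ≤ m →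
      ((π x : Fin n):ℕ) ≤ ((π a : Fin n):ℕ) + m := by
    intro t
    induction t with
    | zero =>
      intro m x hx hsum h1
      have h2 := Fin.lt_def.1 (hA x (by rw [Fin.lt_def]; omega) (by rw [Fin.lt_def]; omega)).2
      omega
    | succ t ih =>
      intro m x hx hsum h1
      have hyn : (b:ℕ) + (m+1) < n := by omega
      set y : Fin n := ⟨(b:ℕ) + (m+1), hyn⟩ with hydef
      have hyval : (y:ℕ) = (b:ℕ) + (m+1) := rfl
      have ihy := ih (m+1) y hyval (by omega) (by omega)
      have hxy := hC x y (by rw [Fin.lt_def]; omega) (by rw [Fin.lt_def]; omega)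
        (by rw [Fin.lt_def]; omega)
      have := Fin.lt_def.1 hxy
      omega
  have hVal : ∀ x : Fin n, b < x → x < c → ((π x : Fin n):ℕ) = ((π a : Fin n):ℕ) + ((x:ℕ) - (b:ℕ)) := by
    intro x h1 h2
    have h1' := Fin.lt_def.1 h1
    have h2' := Fin.lt_def.1 h2
    have hl := hlow ((x:ℕ) - (b:ℕ)) x (by omega) (by omega) (by omega)
    have hu := hupp (mm - ((x:ℕ) - (b:ℕ))) ((x:ℕ) - (b:ℕ)) x (by omega) (by omega) (by omega)
    omega
  -- apply the hypothesis at the box (c, π d)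
  have hpqD : InDiag π ((c:ℕ)) (((π d) : Fin n):ℕ) := by
    refine ⟨hcn, hdn, ?_, ?_⟩
    · have he : (⟨(c:ℕ), hcn⟩ : Fin n) = c := Fin.ext rfl
      rw [he]; exact hdc'
    · have he : (⟨((π d : Fin n):ℕ), hdn⟩ : Fin n) = π d := Fin.ext rfl
      rw [he]; simpa using hcd'
  obtain ⟨i, j, hess, δ, ⟨hmono, hbdd⟩, ⟨l0, hl0⟩, honly⟩ := H ((c:ℕ)) (((π d) : Fin n):ℕ) hpqD
  obtain ⟨hin, hjn, hji, hij⟩ := hess.1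
  have hrow_lt : ∀ l, (δ l).1 < n := fun l => lt_of_le_of_lt (hbdd l).1 hin
  have hcol_lt : ∀ l, (δ l).2 < n := fun l => lt_of_le_of_lt (hbdd l).2 hjn
  have hnotD : ∀ l, l ≠ l0 → ¬ InDiag π (δ l).1 (δ l).2 := by
    intro l hne hInd
    have heq := honly l hInd
    rw [← hl0] at heq
    rcases lt_trichotomy l l0 with h | h | h
    · have h2 := (hmono l l0 h).1
      rw [heq] at h2
      exact lt_irrefl _ h2
    · exact hne h
    · have h2 := (hmono l0 l h).1
      rw [heq] at h2
      exact lt_irrefl _ h2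
  set g : Fin (1 + rk π i j) → Fin n := fun l =>
    if ((π (⟨(δ l).1, hrow_lt l⟩ : Fin n) : Fin n):ℕ) ≤ (δ l).2
    then (⟨(δ l).1, hrow_lt l⟩ : Fin n)
    else π.symm (⟨(δ l).2, hcol_lt l⟩ : Fin n) with hgdef
  have hgspec : ∀ l, l ≠ l0 →
      (((π (⟨(δ l).1, hrow_lt l⟩ : Fin n) : Fin n):ℕ) ≤ (δ l).2 ∧
        g l = (⟨(δ l).1, hrow_lt l⟩ : Fin n))
    ∨ ((δ l).2 < ((π (⟨(δ l).1, hrow_lt l⟩ : Fin n) : Fin n):ℕ) ∧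
       ((π.symm (⟨(δ l).2, hcol_lt l⟩ : Fin n) : Fin n):ℕ) ≤ (δ l).1 ∧
       g l = π.symm (⟨(δ l).2, hcol_lt l⟩ : Fin n)) := by
    intro l hne
    by_cases hcond : ((π (⟨(δ l).1, hrow_lt l⟩ : Fin n) : Fin n):ℕ) ≤ (δ l).2
    · left
      exact ⟨hcond, by simp only [hgdef]; rw [if_pos hcond]⟩
    · right
      push_neg at hcond
      refine ⟨hcond, ?_, by simp only [hgdef]; rw [if_neg (not_le.2 hcond)]⟩
      by_contra hc
      push_neg at hc
      exact hnotD l hne ⟨hrow_lt l, hcol_lt l, hcond, hc⟩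
  set F : Finset (Fin n) := univ.filter (fun t : Fin n => (t:ℕ) ≤ i ∧ ((π t : Fin n):ℕ) ≤ j)
    with hFdef
  have hFcard : F.card = rk π i j := rfl
  set S : Finset (Fin (1 + rk π i j)) := (univ : Finset (Fin (1 + rk π i j))).erase l0 with hSdef
  have hScard : S.card = rk π i j := by
    rw [hSdef, card_erase_of_mem (mem_univ _), card_univ]
    simp
  have hmaps : ∀ l ∈ S, g l ∈ F := by
    intro l hl
    have hne := Finset.ne_of_mem_erase hl
    rcases hgspec l hne with ⟨h1, h2⟩ | ⟨h1, h2, h3⟩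
    · rw [h2]
      exact mem_filter.2 ⟨mem_univ _, (hbdd l).1, le_trans h1 (hbdd l).2⟩
    · rw [h3]
      refine mem_filter.2 ⟨mem_univ _, le_trans h2 (hbdd l).1, ?_⟩
      simp only [Equiv.apply_symm_apply]
      exact (hbdd l).2
  have hinj2 : ∀ l l', l ≠ l0 → l' ≠ l0 → l < l' → g l ≠ g l' := by
    intro l l' hne hne' hll' heq
    have hm := hmono l l' hll'
    rcases hgspec l hne with ⟨h1, h2⟩ | ⟨h1, h2, h3⟩ <;>
      rcases hgspec l' hne' with ⟨h1', h2'⟩ | ⟨h1', h2', h3'⟩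
    · rw [h2, h2'] at heq
      have := congrArg Fin.val heq
      simp only [] at this
      omega
    · rw [h2, h3'] at heq
      have := congrArg (fun z => ((π z : Fin n):ℕ)) heq
      simp only [Equiv.apply_symm_apply] at this
      omega
    · rw [h3, h2'] at heq
      have := congrArg Fin.val heq
      simp only [] at this
      omega
    · rw [h3, h3'] at heq
      have := congrArg (fun z => ((π z : Fin n):ℕ)) heq
      simp only [Equiv.apply_symm_apply] at this
      omega
  have hInjOn : Set.InjOn g ↑S := by
    intro l hl l' hl' heq
    by_contra hne2
    have hne := Finset.ne_of_mem_erase (Finset.mem_coe.1 hl)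
    have hne' := Finset.ne_of_mem_erase (Finset.mem_coe.1 hl')
    rcases lt_or_gt_of_ne hne2 with h | h
    · exact hinj2 l l' hne hne' h heq
    · exact hinj2 l' l hne' hne h heq.symm
  have himgF : S.image g = F := by
    apply Finset.eq_of_subset_of_card_le
    · intro w hw
      obtain ⟨l, hlS, rfl⟩ := mem_image.1 hw
      exact hmaps l hlS
    · rw [Finset.card_image_of_injOn hInjOn, hScard, hFcard]
  have hci : (c:ℕ) ≤ i := by
    have h := (hbdd l0).1; rw [hl0] at h; exact h
  have hdj : ((π d : Fin n):ℕ) ≤ j := by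
    have h := (hbdd l0).2; rw [hl0] at h; exact h
  -- every dot strictly NW of (c, π d) is covered by a strictly NW box of the diagonal
  have hcover : ∀ w : Fin n, (w:ℕ) < (c:ℕ) → ((π w : Fin n):ℕ) < ((π d : Fin n):ℕ) →
      ∃ l, l ≠ l0 ∧ g l = w ∧ (δ l).1 < (c:ℕ) ∧ (δ l).2 < ((π d : Fin n):ℕ) ∧
        (((δ l).1 = (w:ℕ) ∧ ((π w : Fin n):ℕ) ≤ (δ l).2) ∨
         ((δ l).2 = ((π w : Fin n):ℕ) ∧ (w:ℕ) ≤ (δ l).1)) := by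
    intro w hwc hwd
    have hwF : w ∈ F := mem_filter.2 ⟨mem_univ _, by omega, by omega⟩
    rw [← himgF] at hwF
    obtain ⟨l, hlS, hgl⟩ := mem_image.1 hwF
    have hne := Finset.ne_of_mem_erase hlS
    have hglkeep := hgl
    rcases hgspec l hne with ⟨h1, h2⟩ | ⟨h1, h2, h3⟩
    · rw [h2] at hgl
      have hv1 : (δ l).1 = (w:ℕ) := congrArg Fin.val hgl
      have hπ : ((π w : Fin n):ℕ) ≤ (δ l).2 := by rw [← hgl]; exact h1
      have hNW : (δ l).1 < (c:ℕ) ∧ (δ l).2 < ((π d : Fin n):ℕ) := by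
        rcases lt_trichotomy l l0 with h | h | h
        · have h4 := hmono l l0 h
          rw [hl0] at h4
          exact h4
        · exact absurd h hne
        · exfalso
          have h4 := (hmono l0 l h).1
          rw [hl0] at h4
          omega
      exact ⟨l, hne, hglkeep, hNW.1, hNW.2, Or.inl ⟨hv1, hπ⟩⟩
    · rw [h3] at hgl
      have hgl2 : (⟨(δ l).2, hcol_lt l⟩ : Fin n) = π w := by
        rw [← hgl]; simp
      have hv2 : (δ l).2 = ((π w : Fin n):ℕ) := congrArg Fin.val hgl2
      have hw1 : (w:ℕ) ≤ (δ l).1 := by rw [← hgl]; exact h2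
      have hNW : (δ l).1 < (c:ℕ) ∧ (δ l).2 < ((π d : Fin n):ℕ) := by
        rcases lt_trichotomy l l0 with h | h | h
        · have h4 := hmono l l0 h
          rw [hl0] at h4
          exact h4
        · exact absurd h hne
        · exfalso
          have h4 := (hmono l0 l h).2
          rw [hl0] at h4
          omega
      exact ⟨l, hne, hglkeep, hNW.1, hNW.2, Or.inr ⟨hv2, hw1⟩⟩
  -- covers of the dots at a and b
  obtain ⟨la, hla0, hgla, hca, hda, hfa⟩ := hcover a (by omega) (by omega)
  obtain ⟨lb, hlb0, hglb, hcb, hdb, hfb⟩ := hcover b (by omega) (by omega)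
  -- covers of the interior dots
  have hKex : ∀ k, 1 ≤ k → k ≤ mm →
      ∃ l, l ≠ l0 ∧ (δ l).1 < (c:ℕ) ∧ (δ l).2 < ((π d : Fin n):ℕ) ∧
        (∃ hkn : (b:ℕ)+k < n, g l = (⟨(b:ℕ)+k, hkn⟩ : Fin n)) ∧
        (((δ l).1 = (b:ℕ)+k ∧ ((π a : Fin n):ℕ)+k ≤ (δ l).2) ∨
         ((δ l).2 = ((π a : Fin n):ℕ)+k ∧ (b:ℕ)+k ≤ (δ l).1)) := by
    intro k h1 h2
    have hkn : (b:ℕ)+k < n := by omega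
    set w : Fin n := ⟨(b:ℕ)+k, hkn⟩ with hwdef
    have hwval : (w:ℕ) = (b:ℕ)+k := rfl
    have hπw : ((π w : Fin n):ℕ) = ((π a : Fin n):ℕ) + k := by
      have := hVal w (by rw [Fin.lt_def]; omega) (by rw [Fin.lt_def]; omega)
      omega
    obtain ⟨l, hl1, hl2, hl3, hl4, hl5⟩ := hcover w (by omega) (by omega)
    refine ⟨l, hl1, hl3, hl4, ⟨hkn, hl2⟩, ?_⟩
    rcases hl5 with ⟨e1, e2⟩ | ⟨e1, e2⟩
    · exact Or.inl ⟨by omega, by omega⟩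
    · exact Or.inr ⟨by omega, by omega⟩
  choose lk hlk0 hlkc hlkd hlkg hlkf using hKex
  -- distinctness of the covers
  have hlab : la ≠ lb := by
    intro h
    have hgg : g la = g lb := congrArg g h
    rw [hgla, hglb] at hgg
    exact absurd (congrArg Fin.val hgg) (by omega)
  have hlak : ∀ k h1 h2, la ≠ lk k h1 h2 := by
    intro k h1 h2 h
    obtain ⟨hkn, hg⟩ := hlkg k h1 h2
    have hgg : g la = g (lk k h1 h2) := congrArg g h
    rw [hgla, hg] at hgg
    have h4 := congrArg Fin.val hgg
    have h5 : ((⟨(b:ℕ)+k, hkn⟩ : Fin n) : ℕ) = (b:ℕ)+k := rfl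
    omega
  have hlbk : ∀ k h1 h2, lb ≠ lk k h1 h2 := by
    intro k h1 h2 h
    obtain ⟨hkn, hg⟩ := hlkg k h1 h2
    have hgg : g lb = g (lk k h1 h2) := congrArg g h
    rw [hglb, hg] at hgg
    have h4 := congrArg Fin.val hgg
    have h5 : ((⟨(b:ℕ)+k, hkn⟩ : Fin n) : ℕ) = (b:ℕ)+k := rfl
    omega
  have hlkk : ∀ k h1 h2 k' h1' h2', k ≠ k' → lk k h1 h2 ≠ lk k' h1' h2' := by
    intro k h1 h2 k' h1' h2' hkk' h
    obtain ⟨hkn, hg⟩ := hlkg k h1 h2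
    obtain ⟨hkn', hg'⟩ := hlkg k' h1' h2'
    have hgg : g (lk k h1 h2) = g (lk k' h1' h2') := congrArg g h
    rw [hg, hg'] at hgg
    have h4 := congrArg Fin.val hgg
    have h5 : ((⟨(b:ℕ)+k, hkn⟩ : Fin n) : ℕ) = (b:ℕ)+k := rfl
    have h6 : ((⟨(b:ℕ)+k', hkn'⟩ : Fin n) : ℕ) = (b:ℕ)+k' := rfl
    omega
  have hcompD : ∀ l l' : Fin (1 + rk π i j), l ≠ l' →
      ((δ l).1 < (δ l').1 ∧ (δ l).2 < (δ l').2) ∨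
      ((δ l').1 < (δ l).1 ∧ (δ l').2 < (δ l).2) := by
    intro l l' hne
    rcases lt_or_gt_of_ne hne with h | h
    · exact Or.inl (hmono l l' h)
    · exact Or.inr (hmono l' l h)
  -- lower bounds for the interior covers
  have hBk1 : ∀ k h1 h2, (b:ℕ)+k ≤ (δ (lk k h1 h2)).1 ∧
      ((π a : Fin n):ℕ)+k ≤ (δ (lk k h1 h2)).2 := by
    intro k h1 h2
    rcases hlkf k h1 h2 with ⟨e1, e2⟩ | ⟨e1, e2⟩ <;> exact ⟨by omega, by omega⟩
  have hBa2lb : ((π a : Fin n):ℕ) ≤ (δ la).2 := by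
    rcases hfa with ⟨e1, e2⟩ | ⟨e1, e2⟩ <;> omega
  have hBb1lb : (b:ℕ) ≤ (δ lb).1 := by
    rcases hfb with ⟨e1, e2⟩ | ⟨e1, e2⟩ <;> omega
  -- the covers of a and b lie strictly NW of every interior cover
  have hAk : ∀ k h1 h2, (δ la).1 < (δ (lk k h1 h2)).1 ∧ (δ la).2 < (δ (lk k h1 h2)).2 := by
    intro k h1 h2
    rcases hcompD la (lk k h1 h2) (hlak k h1 h2) with h | h
    · exact h
    · exfalso
      obtain ⟨hr, hc2⟩ := h
      have hb1 := hBk1 k h1 h2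
      rcases hfa with ⟨e1, e2⟩ | ⟨e1, e2⟩ <;> omega
  have hBbk : ∀ k h1 h2, (δ lb).1 < (δ (lk k h1 h2)).1 ∧ (δ lb).2 < (δ (lk k h1 h2)).2 := by
    intro k h1 h2
    rcases hcompD lb (lk k h1 h2) (hlbk k h1 h2) with h | h
    · exact h
    · exfalso
      obtain ⟨hr, hc2⟩ := h
      have hb1 := hBk1 k h1 h2
      rcases hfb with ⟨e1, e2⟩ | ⟨e1, e2⟩ <;> omega
  have hKmono : ∀ k h1 h2 k' h1' h2', k < k' →
      (δ (lk k h1 h2)).1 < (δ (lk k' h1' h2')).1 ∧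
      (δ (lk k h1 h2)).2 < (δ (lk k' h1' h2')).2 := by
    intro k h1 h2 k' h1' h2' hkk'
    rcases hcompD (lk k h1 h2) (lk k' h1' h2') (hlkk k h1 h2 k' h1' h2' (by omega)) with h | h
    · exact h
    · exfalso
      obtain ⟨hr, hc2⟩ := h
      have hb1 := hBk1 k h1 h2
      have hb1' := hBk1 k' h1' h2'
      rcases hlkf k h1 h2 with ⟨e1, e2⟩ | ⟨e1, e2⟩ <;> omega
  -- final contradiction
  rcases hcompD la lb hlab with ⟨hr, hc2⟩ | ⟨hr, hc2⟩
  · -- case B_a < B_b : B_b is row type in row b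
    have hbrow : (δ lb).1 = (b:ℕ) ∧ ((π b : Fin n):ℕ) ≤ (δ lb).2 := by
      rcases hfb with h | ⟨e1, e2⟩
      · exact h
      · exfalso; omega
    have hy2 : ((π a : Fin n):ℕ) + 1 ≤ (δ lb).2 := by omega
    by_cases hm0 : mm = 0
    · omega
    · have hrowchain : ∀ k (hk1 : 1 ≤ k) (hk2 : k ≤ mm),
          (δ (lk k hk1 hk2)).1 = (b:ℕ)+k ∧
          ((π a : Fin n):ℕ)+k+1 ≤ (δ (lk k hk1 hk2)).2 := by
        intro k
        induction k with
        | zero => intro hk1 hk2; exact absurd hk1 (by omega)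
        | succ k ih =>
          intro hk1 hk2
          by_cases hk0 : k = 0
          · subst hk0
            have h5 := hBbk (0+1) hk1 hk2
            rcases hlkf (0+1) hk1 hk2 with ⟨e1, e2⟩ | ⟨e1, e2⟩
            · exact ⟨e1, by omega⟩
            · exfalso; omega
          · have hkk1 : 1 ≤ k := by omega
            have hkk2 : k ≤ mm := by omega
            have ihk := ih hkk1 hkk2
            have h5 := hKmono k hkk1 hkk2 (k+1) hk1 hk2 (by omega)
            rcases hlkf (k+1) hk1 hk2 with ⟨e1, e2⟩ | ⟨e1, e2⟩
            · exact ⟨e1, by omega⟩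
            · exfalso; omega
      have hmm1 : 1 ≤ mm := by omega
      have hfin := hrowchain mm hmm1 (le_refl mm)
      have hup := hlkd mm hmm1 (le_refl mm)
      omega
  · -- case B_b < B_a : B_a is column type in column π a
    have hacol : (δ la).2 = ((π a : Fin n):ℕ) ∧ (a:ℕ) ≤ (δ la).1 := by
      rcases hfa with ⟨e1, e2⟩ | h
      · exfalso; omega
      · exact h
    have hx1 : (b:ℕ) + 1 ≤ (δ la).1 := by omega
    by_cases hm0 : mm = 0
    · omega
    · have hcolchain : ∀ k (hk1 : 1 ≤ k) (hk2 : k ≤ mm),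
          (δ (lk k hk1 hk2)).2 = ((π a : Fin n):ℕ)+k ∧
          (b:ℕ)+k+1 ≤ (δ (lk k hk1 hk2)).1 := by
        intro k
        induction k with
        | zero => intro hk1 hk2; exact absurd hk1 (by omega)
        | succ k ih =>
          intro hk1 hk2
          by_cases hk0 : k = 0
          · subst hk0
            have h5 := hAk (0+1) hk1 hk2
            rcases hlkf (0+1) hk1 hk2 with ⟨e1, e2⟩ | ⟨e1, e2⟩
            · exfalso; omega
            · exact ⟨e1, by omega⟩
          · have hkk1 : 1 ≤ k := by omega
            have hkk2 : k ≤ mm := by omega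
            have ihk := ih hkk1 hkk2
            have h5 := hKmono k hkk1 hkk2 (k+1) hk1 hk2 (by omega)
            rcases hlkf (k+1) hk1 hk2 with ⟨e1, e2⟩ | ⟨e1, e2⟩
            · exfalso; omega
            · exact ⟨e1, by omega⟩
      have hmm1 : 1 ≤ mm := by omega
      have hfin := hcolchain mm hmm1 (le_refl mm)
      have hup := hlkc mm hmm1 (le_refl mm)
      omega

lemma backward {n : ℕ} (π : Equiv.Perm (Fin n)) (hvex : Vexillary π)
    (p q : ℕ) (hpq : InDiag π p q) :
    ∃ i j : ℕ, InEss π i j ∧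
      ∃ δ : Fin (1 + rk π i j) → ℕ × ℕ, IsDiagonalIn (1 + rk π i j) δ i j ∧
        (∃ l, δ l = (p, q)) ∧
        (∀ l, InDiag π (δ l).1 (δ l).2 → δ l = (p, q)) := by
  classical
  have hpqD : InDiag π p q := hpq
  obtain ⟨hpn, hqn⟩ := indiag_lt π hpq
  obtain ⟨i, j, hess, hpi, hqj, hcol, hrow⟩ := walk_ess π (2*n) p q (by omega) hpq
  have hD : InDiag π i j := hess.1
  obtain ⟨hin, hjn, hji, hij⟩ := hD
  have hD : InDiag π i j := hess.1
  set NWD : Finset (Fin n) := univ.filter (fun t => (t:ℕ) < p ∧ (π t:ℕ) < q) with hNWDdef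
  set REM : Finset (Fin n) :=
    univ.filter (fun t => (t:ℕ) ≤ i ∧ (π t:ℕ) ≤ j ∧ ¬((t:ℕ) < p ∧ (π t:ℕ) < q)) with hREMdef
  have hNWmem : ∀ t : Fin n, t ∈ NWD ↔ (t:ℕ) < p ∧ (π t:ℕ) < q := by
    intro t; simp [hNWDdef]
  have hREMmem : ∀ t : Fin n, t ∈ REM ↔
      ((t:ℕ) ≤ i ∧ (π t:ℕ) ≤ j ∧ ¬((t:ℕ) < p ∧ (π t:ℕ) < q)) := by
    intro t; simp [hREMdef]
  -- basic facts about boxes (p,q) and (i,j)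
  obtain ⟨hp', hq', hπp, hπq⟩ := hpq
  have hπp : q < (π ⟨p, hpn⟩ : ℕ) := hπp
  have hπq : p < (π.symm ⟨q, hqn⟩ : ℕ) := hπq
  -- properties of the remaining dots
  have hREMprop : ∀ t : Fin n, t ∈ REM →
      p ≤ (t:ℕ) ∧ (t:ℕ) < i ∧ q ≤ (π t:ℕ) ∧ (π t:ℕ) < j ∧
      ((t:ℕ) = p → q < (π t:ℕ)) ∧ ((π t:ℕ) = q → p < (t:ℕ)) := by
    intro t ht
    obtain ⟨hti, htj, hnot⟩ := (hREMmem t).1 ht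
    -- t < i
    have hti' : (t:ℕ) < i := by
      rcases lt_or_eq_of_le hti with h | h
      · exact h
      · exfalso
        have : t = ⟨i, hin⟩ := Fin.ext h
        rw [this] at htj; omega
    -- π t < j
    have htj' : (π t:ℕ) < j := by
      rcases lt_or_eq_of_le htj with h | h
      · exact h
      · exfalso
        have h1 : π t = ⟨j, hjn⟩ := Fin.ext h
        have h2 : t = π.symm ⟨j, hjn⟩ := by rw [← h1]; simp
        rw [h2] at hti; omega
    -- not a strictly-NE dot, hence p ≤ t
    have hpt : p ≤ (t:ℕ) := by
      by_contra hc
      push_neg at hc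
      have htq : q < (π t:ℕ) := by
        rcases lt_trichotomy ((π t:ℕ)) q with h | h | h
        · exact absurd ⟨hc, h⟩ hnot
        · exfalso
          have h1 : π t = ⟨q, hqn⟩ := Fin.ext h
          have h2 : t = π.symm ⟨q, hqn⟩ := by rw [← h1]; simp
          rw [h2] at hc; omega
        · exact h
      obtain ⟨x, hx1, hx2, hxD⟩ := hcol ((π t:ℕ)) (le_of_lt htq) (le_of_lt htj')
      obtain ⟨hxn, hπtn, -, hB⟩ := hxD
      have : (⟨(π t:ℕ), hπtn⟩ : Fin n) = π t := Fin.ext rfl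
      rw [this] at hB
      simp at hB
      omega
    -- not a strictly-SW dot, hence q ≤ π t
    have hqt : q ≤ (π t:ℕ) := by
      by_contra hc
      push_neg at hc
      have hpt' : p < (t:ℕ) := by
        rcases lt_or_eq_of_le hpt with h | h
        · exact h
        · exfalso
          have h1 : t = ⟨p, hpn⟩ := Fin.ext h.symm
          rw [h1] at hc; omega
      obtain ⟨y, hy1, hy2, hyD⟩ := hrow ((t:ℕ)) (le_of_lt hpt') (le_of_lt hti')
      obtain ⟨hxn, hyn, hA, -⟩ := hyD
      have : (⟨(t:ℕ), hxn⟩ : Fin n) = t := Fin.ext rfl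
      rw [this] at hA
      omega
    refine ⟨hpt, hti', hqt, htj', ?_, ?_⟩
    · intro h
      have h1 : t = ⟨p, hpn⟩ := Fin.ext h
      rw [h1]; exact hπp
    · intro h
      have h1 : π t = ⟨q, hqn⟩ := Fin.ext h
      have h2 : t = π.symm ⟨q, hqn⟩ := by rw [← h1]; simp
      rw [h2]; exact hπq
  -- the rank splits
  set s := NWD.card with hs
  set R := REM.card with hR
  have hrk : rk π i j = s + R := by
    have hsplit : univ.filter (fun t : Fin n => (t:ℕ) ≤ i ∧ (π t:ℕ) ≤ j) = NWD ∪ REM := by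
      ext t
      simp only [mem_filter, mem_union, mem_univ, true_and, hNWmem, hREMmem]
      constructor
      · intro h
        by_cases hc : (t:ℕ) < p ∧ (π t:ℕ) < q
        · exact Or.inl hc
        · exact Or.inr ⟨h.1, h.2, hc⟩
      · rintro (h | h)
        · exact ⟨by omega, by omega⟩
        · exact ⟨h.1, h.2.1⟩
    have hdisj : Disjoint NWD REM := by
      rw [Finset.disjoint_left]
      intro t h1 h2
      rw [hNWmem] at h1
      exact ((hREMmem t).1 h2).2.2 h1
    rw [rk, hsplit, card_union_of_disjoint hdisj]

  -- enumerations of the two dot sets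
  set oN := NWD.orderIsoOfFin hs.symm with hoN
  set oR := REM.orderIsoOfFin hR.symm with hoR
  have hNr : ∀ u v : Fin s, u < v → ((oN u : Fin n):ℕ) < ((oN v : Fin n):ℕ) := by
    intro u v huv
    have h1 : oN u < oN v := oN.lt_iff_lt.2 huv
    rw [← Subtype.coe_lt_coe, Fin.lt_def] at h1
    exact h1
  have hNc : ∀ u v : Fin s, u < v → ((π (oN u : Fin n) : Fin n):ℕ) < ((π (oN v : Fin n) : Fin n):ℕ) := by
    intro u v huv
    have hmu := (hNWmem _).1 (oN u).2
    have hmv := (hNWmem _).1 (oN v).2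
    have := chainL hvex hpqD (oN u : Fin n) (oN v : Fin n) (le_of_lt hmu.1) (le_of_lt hmu.2)
      (le_of_lt hmv.1) (le_of_lt hmv.2) (Fin.lt_def.2 (hNr u v huv))
    exact Fin.lt_def.1 this
  have hRr : ∀ u v : Fin R, u < v → ((oR u : Fin n):ℕ) < ((oR v : Fin n):ℕ) := by
    intro u v huv
    have h1 : oR u < oR v := oR.lt_iff_lt.2 huv
    rw [← Subtype.coe_lt_coe, Fin.lt_def] at h1
    exact h1
  have hRc : ∀ u v : Fin R, u < v → ((π (oR u : Fin n) : Fin n):ℕ) < ((π (oR v : Fin n) : Fin n):ℕ) := by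
    intro u v huv
    have hmu := hREMprop _ (oR u).2
    have hmv := hREMprop _ (oR v).2
    have := chainL hvex hD (oR u : Fin n) (oR v : Fin n) (le_of_lt hmu.2.1) (le_of_lt hmu.2.2.2.1)
      (le_of_lt hmv.2.1) (le_of_lt hmv.2.2.2.1) (Fin.lt_def.2 (hRr u v huv))
    exact Fin.lt_def.1 this
  have hrowlb : ∀ (m : ℕ) (hm : m < R), p + m ≤ ((oR ⟨m, hm⟩ : Fin n):ℕ) := by
    intro m
    induction m with
    | zero =>
      intro hm
      have := (hREMprop _ (oR ⟨0, hm⟩).2).1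
      omega
    | succ m ihm =>
      intro hm
      have h1 := ihm (by omega)
      have h2 := hRr ⟨m, by omega⟩ ⟨m+1, hm⟩ (by rw [Fin.mk_lt_mk]; omega)
      omega
  have hcollb : ∀ (m : ℕ) (hm : m < R), q + m ≤ ((π (oR ⟨m, hm⟩ : Fin n) : Fin n):ℕ) := by
    intro m
    induction m with
    | zero =>
      intro hm
      have := (hREMprop _ (oR ⟨0, hm⟩).2).2.2.1
      omega
    | succ m ihm =>
      intro hm
      have h1 := ihm (by omega)
      have h2 := hRc ⟨m, by omega⟩ ⟨m+1, hm⟩ (by rw [Fin.mk_lt_mk]; omega)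
      omega
  -- boxes weakly east/south of a dot are not in the diagram
  have hnotD2 : ∀ (t : Fin n) (x : ℕ), (t:ℕ) ≤ x → ¬ InDiag π x ((π t : Fin n):ℕ) := by
    rintro t x htx ⟨h1, h2, h3, h4⟩
    have he : (⟨((π t : Fin n):ℕ), h2⟩ : Fin n) = π t := Fin.ext rfl
    rw [he] at h4
    simp at h4
    omega
  have hnotD3 : ∀ (t : Fin n) (y : ℕ), ((π t : Fin n):ℕ) ≤ y → ¬ InDiag π ((t:ℕ)) y := by
    rintro t y hty ⟨h1, h2, h3, h4⟩
    have he : (⟨(t:ℕ), h1⟩ : Fin n) = t := Fin.ext rfl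
    rw [he] at h3
    omega
  refine ⟨i, j, hess, ?_⟩
  rw [hrk]
  by_cases hcq : ∃ t ∈ REM, ((π t : Fin n):ℕ) = q
  · -- a dot in column q : all remaining dots are strictly south of row p
    have hallgt : ∀ t ∈ REM, p < (t:ℕ) := by
      obtain ⟨t0, ht0, ht0q⟩ := hcq
      intro t ht
      rcases eq_or_ne t t0 with rfl | hne
      · exact (hREMprop t ht).2.2.2.2.2 ht0q
      · have hvne : (t:ℕ) ≠ (t0:ℕ) := fun h => hne (Fin.ext h)
        rcases lt_or_gt_of_ne hvne with h | h
        · exfalso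
          have hmu := hREMprop _ ht
          have hmv := hREMprop _ ht0
          have := chainL hvex hD t t0 (le_of_lt hmu.2.1) (le_of_lt hmu.2.2.2.1)
            (le_of_lt hmv.2.1) (le_of_lt hmv.2.2.2.1) (Fin.lt_def.2 h)
          rw [Fin.lt_def] at this
          omega
        · have := (hREMprop t0 ht0).2.2.2.2.2 ht0q
          omega
    set δ : Fin (1 + (s + R)) → ℕ × ℕ := fun l =>
      if hv : (l:ℕ) < s then
        (((oN ⟨(l:ℕ), hv⟩ : Fin n):ℕ), ((π (oN ⟨(l:ℕ), hv⟩ : Fin n) : Fin n):ℕ))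
      else if hv2 : (l:ℕ) = s then (p, q)
      else (((oR ⟨(l:ℕ)-s-1, by omega⟩ : Fin n):ℕ),
            max ((π (oR ⟨(l:ℕ)-s-1, by omega⟩ : Fin n) : Fin n):ℕ) (q + ((l:ℕ) - s))) with hδdef
    have hδNW : ∀ (l : Fin (1+(s+R))) (hv : (l:ℕ) < s),
        δ l = (((oN ⟨(l:ℕ), hv⟩ : Fin n):ℕ), ((π (oN ⟨(l:ℕ), hv⟩ : Fin n) : Fin n):ℕ)) := by
      intro l hv; simp only [hδdef]; rw [dif_pos hv]
    have hδM : ∀ (l : Fin (1+(s+R))) (hv : (l:ℕ) = s), δ l = (p, q) := by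
      intro l hv; simp only [hδdef]; rw [dif_neg (by omega), dif_pos hv]
    have hδSE : ∀ (l : Fin (1+(s+R))) (hv : s < (l:ℕ)) (hw : (l:ℕ)-s-1 < R),
        δ l = (((oR ⟨(l:ℕ)-s-1, hw⟩ : Fin n):ℕ),
          max ((π (oR ⟨(l:ℕ)-s-1, hw⟩ : Fin n) : Fin n):ℕ) (q + ((l:ℕ) - s))) := by
      intro l hv hw; simp only [hδdef]; rw [dif_neg (by omega), dif_neg (by omega)]
    refine ⟨δ, ⟨?_, ?_⟩, ?_, ?_⟩
    · -- strict monotonicity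
      intro l l' hll'
      have hv : (l:ℕ) < (l':ℕ) := Fin.lt_def.1 hll'
      by_cases h1 : (l:ℕ) < s
      · rw [hδNW l h1]
        by_cases h2 : (l':ℕ) < s
        · rw [hδNW l' h2]
          exact ⟨hNr ⟨l, h1⟩ ⟨l', h2⟩ (by rw [Fin.mk_lt_mk]; omega),
                 hNc ⟨l, h1⟩ ⟨l', h2⟩ (by rw [Fin.mk_lt_mk]; omega)⟩
        · by_cases h3 : (l':ℕ) = s
          · rw [hδM l' h3]
            have hm := (hNWmem _).1 (oN ⟨(l:ℕ), h1⟩).2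
            exact ⟨hm.1, hm.2⟩
          · have h4 : s < (l':ℕ) := by omega
            have hw : (l':ℕ)-s-1 < R := by omega
            rw [hδSE l' h4 hw]
            have hm := (hNWmem _).1 (oN ⟨(l:ℕ), h1⟩).2
            constructor
            · exact lt_trans hm.1 (hallgt _ (oR _).2)
            · exact lt_of_lt_of_le (by omega) (le_max_right _ _)
      · by_cases h3 : (l:ℕ) = s
        · rw [hδM l h3]
          have h4 : s < (l':ℕ) := by omega
          have hw : (l':ℕ)-s-1 < R := by omega
          rw [hδSE l' h4 hw]
          constructor
          · exact hallgt _ (oR _).2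
          · exact lt_of_lt_of_le (by omega) (le_max_right _ _)
        · have h4 : s < (l:ℕ) := by omega
          have hw : (l:ℕ)-s-1 < R := by omega
          have h4' : s < (l':ℕ) := by omega
          have hw' : (l':ℕ)-s-1 < R := by omega
          rw [hδSE l h4 hw, hδSE l' h4' hw']
          constructor
          · exact hRr _ _ (by rw [Fin.mk_lt_mk]; omega)
          · exact max_lt_max (hRc _ _ (by rw [Fin.mk_lt_mk]; omega)) (by omega)
    · -- bounds
      intro l
      by_cases h1 : (l:ℕ) < s
      · rw [hδNW l h1]
        have hm := (hNWmem _).1 (oN ⟨(l:ℕ), h1⟩).2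
        exact ⟨by omega, by omega⟩
      · by_cases h3 : (l:ℕ) = s
        · rw [hδM l h3]; exact ⟨hpi, hqj⟩
        · have h4 : s < (l:ℕ) := by omega
          have hw : (l:ℕ)-s-1 < R := by omega
          rw [hδSE l h4 hw]
          have hm := hREMprop _ (oR ⟨(l:ℕ)-s-1, hw⟩).2
          have hlb := hcollb ((l:ℕ)-s-1) hw
          exact ⟨by omega, max_le (by omega) (by omega)⟩
    · exact ⟨⟨s, by omega⟩, hδM _ rfl⟩
    · intro l hInd
      by_cases h1 : (l:ℕ) < s
      · rw [hδNW l h1] at hInd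
        exact absurd hInd (hnotD3 _ _ (le_refl _))
      · by_cases h3 : (l:ℕ) = s
        · exact hδM l h3
        · have h4 : s < (l:ℕ) := by omega
          have hw : (l:ℕ)-s-1 < R := by omega
          rw [hδSE l h4 hw] at hInd
          exact absurd hInd (hnotD3 _ _ (le_max_left _ _))
  · -- no dot in column q : all remaining dots are strictly east of column q
    have hallcq : ∀ t ∈ REM, q < ((π t : Fin n):ℕ) := by
      push_neg at hcq
      intro t ht
      exact lt_of_le_of_ne (hREMprop t ht).2.2.1 (Ne.symm (hcq t ht))
    set δ : Fin (1 + (s + R)) → ℕ × ℕ := fun l =>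
      if hv : (l:ℕ) < s then
        (((oN ⟨(l:ℕ), hv⟩ : Fin n):ℕ), ((π (oN ⟨(l:ℕ), hv⟩ : Fin n) : Fin n):ℕ))
      else if hv2 : (l:ℕ) = s then (p, q)
      else (max ((oR ⟨(l:ℕ)-s-1, by omega⟩ : Fin n):ℕ) (p + ((l:ℕ) - s)),
            ((π (oR ⟨(l:ℕ)-s-1, by omega⟩ : Fin n) : Fin n):ℕ)) with hδdef
    have hδNW : ∀ (l : Fin (1+(s+R))) (hv : (l:ℕ) < s),
        δ l = (((oN ⟨(l:ℕ), hv⟩ : Fin n):ℕ), ((π (oN ⟨(l:ℕ), hv⟩ : Fin n) : Fin n):ℕ)) := by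
      intro l hv; simp only [hδdef]; rw [dif_pos hv]
    have hδM : ∀ (l : Fin (1+(s+R))) (hv : (l:ℕ) = s), δ l = (p, q) := by
      intro l hv; simp only [hδdef]; rw [dif_neg (by omega), dif_pos hv]
    have hδSE : ∀ (l : Fin (1+(s+R))) (hv : s < (l:ℕ)) (hw : (l:ℕ)-s-1 < R),
        δ l = (max ((oR ⟨(l:ℕ)-s-1, hw⟩ : Fin n):ℕ) (p + ((l:ℕ) - s)),
          ((π (oR ⟨(l:ℕ)-s-1, hw⟩ : Fin n) : Fin n):ℕ)) := by
      intro l hv hw; simp only [hδdef]; rw [dif_neg (by omega), dif_neg (by omega)]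
    refine ⟨δ, ⟨?_, ?_⟩, ?_, ?_⟩
    · intro l l' hll'
      have hv : (l:ℕ) < (l':ℕ) := Fin.lt_def.1 hll'
      by_cases h1 : (l:ℕ) < s
      · rw [hδNW l h1]
        by_cases h2 : (l':ℕ) < s
        · rw [hδNW l' h2]
          exact ⟨hNr ⟨l, h1⟩ ⟨l', h2⟩ (by rw [Fin.mk_lt_mk]; omega),
                 hNc ⟨l, h1⟩ ⟨l', h2⟩ (by rw [Fin.mk_lt_mk]; omega)⟩
        · by_cases h3 : (l':ℕ) = s
          · rw [hδM l' h3]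
            have hm := (hNWmem _).1 (oN ⟨(l:ℕ), h1⟩).2
            exact ⟨hm.1, hm.2⟩
          · have h4 : s < (l':ℕ) := by omega
            have hw : (l':ℕ)-s-1 < R := by omega
            rw [hδSE l' h4 hw]
            have hm := (hNWmem _).1 (oN ⟨(l:ℕ), h1⟩).2
            constructor
            · exact lt_of_lt_of_le (by omega) (le_max_right _ _)
            · exact lt_trans hm.2 (hallcq _ (oR _).2)
      · by_cases h3 : (l:ℕ) = s
        · rw [hδM l h3]
          have h4 : s < (l':ℕ) := by omega
          have hw : (l':ℕ)-s-1 < R := by omega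
          rw [hδSE l' h4 hw]
          constructor
          · exact lt_of_lt_of_le (by omega) (le_max_right _ _)
          · exact hallcq _ (oR _).2
        · have h4 : s < (l:ℕ) := by omega
          have hw : (l:ℕ)-s-1 < R := by omega
          have h4' : s < (l':ℕ) := by omega
          have hw' : (l':ℕ)-s-1 < R := by omega
          rw [hδSE l h4 hw, hδSE l' h4' hw']
          constructor
          · exact max_lt_max (hRr _ _ (by rw [Fin.mk_lt_mk]; omega)) (by omega)
          · exact hRc _ _ (by rw [Fin.mk_lt_mk]; omega)
    · intro l
      by_cases h1 : (l:ℕ) < s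
      · rw [hδNW l h1]
        have hm := (hNWmem _).1 (oN ⟨(l:ℕ), h1⟩).2
        exact ⟨by omega, by omega⟩
      · by_cases h3 : (l:ℕ) = s
        · rw [hδM l h3]; exact ⟨hpi, hqj⟩
        · have h4 : s < (l:ℕ) := by omega
          have hw : (l:ℕ)-s-1 < R := by omega
          rw [hδSE l h4 hw]
          have hm := hREMprop _ (oR ⟨(l:ℕ)-s-1, hw⟩).2
          have hlb := hrowlb ((l:ℕ)-s-1) hw
          exact ⟨max_le (by omega) (by omega), by omega⟩
    · exact ⟨⟨s, by omega⟩, hδM _ rfl⟩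
    · intro l hInd
      by_cases h1 : (l:ℕ) < s
      · rw [hδNW l h1] at hInd
        exact absurd hInd (hnotD3 _ _ (le_refl _))
      · by_cases h3 : (l:ℕ) = s
        · exact hδM l h3
        · have h4 : s < (l:ℕ) := by omega
          have hw : (l:ℕ)-s-1 < R := by omega
          rw [hδSE l h4 hw] at hInd
          exact absurd hInd (hnotD2 _ _ (le_max_left _ _))

/-- The poisoning of `A_π` by `D(π)` is minimal (for every box `(p,q) ∈ D(π)` there
is an essential box `(i,j)` and a diagonal of size `1 + r(i,j)` in the northwest
rectangle of `(i,j)` meeting `D(π)` only at `(p,q)`) if and only if `π` is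
vexillary. -/
theorem stmt_19 {n : ℕ} (π : Equiv.Perm (Fin n)) :
    (∀ p q : ℕ, InDiag π p q →
      ∃ i j : ℕ, InEss π i j ∧
        ∃ δ : Fin (1 + rk π i j) → ℕ × ℕ, IsDiagonalIn (1 + rk π i j) δ i j ∧
          (∃ l, δ l = (p, q)) ∧
          (∀ l, InDiag π (δ l).1 (δ l).2 → δ l = (p, q))) ↔
      Vexillary π := by
  exact ⟨fun h => forward π h, fun hv p q hpq => backward π hv p q hpq⟩
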